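/- arXiv:1903.08461 — 4 statements merged into one kernel-verified Lean document; each statement's English description precedes it below -/
import Mathlib

section
/- Let H be a complex Hilbert space and h > 0. Let A : ℝ → B(H) assign to each s ∈ ℝ a bounded self-adjoint operator A(s) on H, let w : ℝ → H be differentiable and f : ℝ → H be continuous, and suppose h·w′(s) = i·(A(s)(w(s)) + f(s)) for every s ∈ ℝ, where i is the imaginary unit. Then for all real numbers x ≤ t one has |‖w(x)‖ − ‖w(t)‖| ≤ h⁻¹ ∫_x^t ‖f(s)‖ ds. -/
open scoped InnerProductSpace

/-- Let `H` be a complex Hilbert space and `h > 0`. Suppose `A(s)` is a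
bounded self-adjoint operator on `H` for each `s ∈ ℝ`, `w : ℝ → H` is differentiable with
derivative `w'`, `f : ℝ → H` is continuous, and `h·w′(s) = i·(A(s)(w(s)) + f(s))` for all
`s`. Then for all `x ≤ t`, `|‖w(x)‖ − ‖w(t)‖| ≤ h⁻¹ ∫_x^t ‖f(s)‖ ds`. -/
theorem stmt5
    {H : Type*} [NormedAddCommGroup H] [InnerProductSpace ℂ H] [CompleteSpace H]
    (h : ℝ) (hh : 0 < h)
    (A : ℝ → (H →L[ℂ] H))
    (hA : ∀ s : ℝ, ∀ u v : H, ⟪A s u, v⟫_ℂ = ⟪u, A s v⟫_ℂ)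
    (w w' f : ℝ → H)
    (hw : ∀ s : ℝ, HasDerivAt w (w' s) s)
    (hf : Continuous f)
    (heq : ∀ s : ℝ, h • w' s = Complex.I • (A s (w s) + f s))
    (x t : ℝ) (hxt : x ≤ t) :
    |‖w x‖ - ‖w t‖| ≤ h⁻¹ * ∫ s in x..t, ‖f s‖ := by
  have hwc : Continuous w := by
    rw [continuous_iff_continuousAt]; exact fun s => (hw s).continuousAt
  -- expression of w'
  have hw' : ∀ s, w' s = (h⁻¹ : ℝ) • (Complex.I • (A s (w s) + f s)) := by
    intro s
    rw [← heq s, smul_smul, inv_mul_cancel₀ hh.ne', one_smul]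
  -- real part of ⟪w' s, w s⟫
  have hre : ∀ s, (⟪w' s, w s⟫_ℂ).re = h⁻¹ * (⟪f s, w s⟫_ℂ).im := by
    intro s
    have hAim : (⟪A s (w s), w s⟫_ℂ).im = 0 := by
      have hc : (starRingEnd ℂ) ⟪A s (w s), w s⟫_ℂ = ⟪A s (w s), w s⟫_ℂ := by
        rw [inner_conj_symm]
        exact (hA s (w s) (w s)).symm
      have := Complex.conj_eq_iff_im.mp hc
      exact this
    rw [hw' s, RCLike.real_smul_eq_coe_smul (K := ℂ), inner_smul_left, inner_smul_left,
      inner_add_left, Complex.conj_I, RCLike.conj_ofReal]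
    simp [Complex.mul_re, Complex.mul_im, Complex.add_im, Complex.add_re, hAim]
  -- derivative of ‖w s‖²
  have key : ∀ s, HasDerivAt (fun u => ‖w u‖^2)
      (2 * (h⁻¹ * (⟪f s, w s⟫_ℂ).im)) s := by
    intro s
    have h1 := (hw s).inner ℂ (hw s)
    have h2 := (Complex.reCLM.hasFDerivAt
      (x := ⟪w s, w s⟫_ℂ)).comp_hasDerivAt s h1
    have e1 : (fun u => Complex.reCLM ⟪w u, w u⟫_ℂ) = fun u => ‖w u‖^2 := by
      funext u
      exact inner_self_eq_norm_sq (𝕜 := ℂ) (w u)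
    have e2 : Complex.reCLM (⟪w s, w' s⟫_ℂ + ⟪w' s, w s⟫_ℂ)
        = 2 * (h⁻¹ * (⟪f s, w s⟫_ℂ).im) := by
      have hsym : (⟪w s, w' s⟫_ℂ).re = (⟪w' s, w s⟫_ℂ).re := by
        rw [← inner_conj_symm (w s) (w' s), Complex.conj_re]
      simp only [Complex.reCLM_apply, Complex.add_re, hsym, hre s]
      ring
    simp only [Function.comp_def] at h2
    rw [e1, e2] at h2
    exact h2
  have hIm : Continuous fun s => (⟪f s, w s⟫_ℂ).im := by
    exact Complex.continuous_im.comp (continuous_inner.comp (hf.prodMk hwc))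
  -- main estimate with regularization
  have main : ∀ ε : ℝ, 0 < ε →
      |‖w x‖ - ‖w t‖| ≤ h⁻¹ * (∫ s in x..t, ‖f s‖) + 2*ε := by
    intro ε hε
    set ψ : ℝ → ℝ := fun s => Real.sqrt (‖w s‖^2 + ε^2) with hψdef
    set ψ' : ℝ → ℝ := fun s =>
      (2 * (h⁻¹ * (⟪f s, w s⟫_ℂ).im)) / (2 * Real.sqrt (‖w s‖^2 + ε^2)) with hψ'def
    have hpos : ∀ s, 0 < ‖w s‖^2 + ε^2 := fun s => by positivity
    have hsp : ∀ s, 0 < Real.sqrt (‖w s‖^2 + ε^2) := fun s => Real.sqrt_pos.mpr (hpos s)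
    have hψd : ∀ s, HasDerivAt ψ (ψ' s) s := fun s =>
      ((key s).add_const (ε^2)).sqrt (hpos s).ne'
    have hψ'c : Continuous ψ' := by
      apply Continuous.div
      · exact (continuous_const.mul (continuous_const.mul hIm))
      · exact continuous_const.mul ((hwc.norm.pow 2).add continuous_const).sqrt
      · intro s; exact (by positivity : (0:ℝ) < 2 * Real.sqrt (‖w s‖^2 + ε^2)).ne'
    have hInt : IntervalIntegrable ψ' MeasureTheory.volume x t := hψ'c.intervalIntegrable x t
    have hFTC : ∫ s in x..t, ψ' s = ψ t - ψ x :=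
      intervalIntegral.integral_eq_sub_of_hasDerivAt (fun s _ => hψd s) hInt
    -- pointwise bound
    have hbound : ∀ s, |ψ' s| ≤ h⁻¹ * ‖f s‖ := by
      intro s
      have him : |(⟪f s, w s⟫_ℂ).im| ≤ ‖f s‖ * ‖w s‖ := by
        refine le_trans (Complex.abs_im_le_norm _) ?_
        exact norm_inner_le_norm _ _
      have hsq : ‖w s‖ ≤ Real.sqrt (‖w s‖^2 + ε^2) := by
        refine le_trans ?_ (Real.sqrt_le_sqrt (by nlinarith [sq_nonneg ε] : ‖w s‖^2 ≤ ‖w s‖^2 + ε^2))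
        rw [Real.sqrt_sq (norm_nonneg _)]
      rw [hψ'def]
      rw [abs_div, abs_of_pos (by positivity : (0:ℝ) < 2 * Real.sqrt (‖w s‖^2 + ε^2)),
        div_le_iff₀ (by positivity)]
      have h2 : |2 * (h⁻¹ * (⟪f s, w s⟫_ℂ).im)| = 2 * (h⁻¹ * |(⟪f s, w s⟫_ℂ).im|) := by
        rw [abs_mul, abs_mul, abs_of_nonneg (by positivity : (0:ℝ) ≤ h⁻¹)]
        norm_num
      rw [h2]
      have hi : (0:ℝ) ≤ h⁻¹ := by positivity
      nlinarith [mul_le_mul_of_nonneg_left him hi, norm_nonneg (f s),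
        mul_le_mul_of_nonneg_left hsq (mul_nonneg hi (norm_nonneg (f s))), hsp s]
    -- integral bound
    have hib : |ψ x - ψ t| ≤ h⁻¹ * ∫ s in x..t, ‖f s‖ := by
      rw [abs_sub_comm, ← hFTC]
      refine le_trans (intervalIntegral.abs_integral_le_integral_abs hxt) ?_
      rw [← intervalIntegral.integral_const_mul]
      exact intervalIntegral.integral_mono_on hxt hInt.abs
        ((continuous_const.mul hf.norm).intervalIntegrable x t) (fun s _ => hbound s)
    -- closeness of ψ to ‖w‖
    have hclose : ∀ s, |ψ s - ‖w s‖| ≤ ε := by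
      intro s
      have hub : ψ s ≤ ‖w s‖ + ε := by
        rw [hψdef]
        refine le_trans (Real.sqrt_le_sqrt (by nlinarith [norm_nonneg (w s)] :
          ‖w s‖^2 + ε^2 ≤ (‖w s‖ + ε)^2)) ?_
        rw [Real.sqrt_sq (by positivity)]
      have hlb : ‖w s‖ ≤ ψ s := by
        rw [hψdef]
        refine le_trans ?_ (Real.sqrt_le_sqrt (by nlinarith [sq_nonneg ε] :
          ‖w s‖^2 ≤ ‖w s‖^2 + ε^2))
        rw [Real.sqrt_sq (norm_nonneg _)]
      rw [abs_le]
      constructor <;> linarith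
    calc |‖w x‖ - ‖w t‖| ≤ |‖w x‖ - ψ x| + |ψ x - ‖w t‖| := abs_sub_le _ _ _
      _ ≤ |‖w x‖ - ψ x| + (|ψ x - ψ t| + |ψ t - ‖w t‖|) := by
          linarith [abs_sub_le (ψ x) (ψ t) (‖w t‖)]
      _ ≤ ε + (h⁻¹ * (∫ s in x..t, ‖f s‖) + ε) := by
          have h1 := hclose x; have h2 := hclose t
          rw [abs_sub_comm (‖w x‖) (ψ x)]
          linarith [hib]
      _ = h⁻¹ * (∫ s in x..t, ‖f s‖) + 2*ε := by ring
  refine le_of_forall_pos_le_add ?_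
  intro ε hε
  calc |‖w x‖ - ‖w t‖| ≤ h⁻¹ * (∫ s in x..t, ‖f s‖) + 2*(ε/2) := main (ε/2) (by linarith)
    _ = h⁻¹ * (∫ s in x..t, ‖f s‖) + ε := by ring
end

section
/- Let H be a complex Hilbert space, h > 0 and ε > 0. Let A : ℝ → B(H) assign to each s ∈ ℝ a bounded self-adjoint operator A(s) on H, let w : ℝ → H be differentiable and f : ℝ → H be continuous, and suppose h·w′(s) = i·(A(s)(w(s)) + f(s)) for every s ∈ ℝ, where i is the imaginary unit. Then for every x ∈ [−ε, ε], ‖w(x)‖ ≤ √3 · ε^{−1/2} · ( ∫_{−ε}^{ε} ‖w(t)‖² dt )^{1/2} + √2 · ε^{1/2} · h⁻¹ · ( ∫_{−ε}^{ε} ‖f(s)‖² ds )^{1/2}. -/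
open scoped InnerProductSpace

private lemma stmt6_deriv
    {H : Type*} [NormedAddCommGroup H] [InnerProductSpace ℂ H]
    (h : ℝ) (hh : 0 < h)
    (A : ℝ → (H →L[ℂ] H))
    (hA : ∀ s : ℝ, ∀ u v : H, ⟪A s u, v⟫_ℂ = ⟪u, A s v⟫_ℂ)
    (w w' f : ℝ → H)
    (hw : ∀ s : ℝ, HasDerivAt w (w' s) s)
    (heq : ∀ s : ℝ, h • w' s = Complex.I • (A s (w s) + f s)) (s : ℝ) :
    HasDerivAt (fun t => ‖w t‖ ^ 2) (2 * h⁻¹ * (⟪f s, w s⟫_ℂ).im) s := by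
  letI : InnerProductSpace ℝ H := InnerProductSpace.rclikeToReal ℂ H
  have h1 : HasDerivAt (fun t => (⟪w t, w t⟫_ℝ : ℝ)) (⟪w s, w' s⟫_ℝ + ⟪w' s, w s⟫_ℝ) s :=
    HasDerivAt.inner ℝ (hw s) (hw s)
  have hws : w' s = (h⁻¹ : ℝ) • (Complex.I • (A s (w s) + f s)) := by
    rw [← heq s, smul_smul, inv_mul_cancel₀ hh.ne', one_smul]
  have hre : ⟪w' s, w s⟫_ℝ = h⁻¹ * (⟪f s, w s⟫_ℂ).im := by
    have him : (⟪A s (w s), w s⟫_ℂ).im = 0 := by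
      have := hA s (w s) (w s)
      rw [← inner_conj_symm (w s) (A s (w s))] at this
      have h2 : (starRingEnd ℂ) ⟪A s (w s), w s⟫_ℂ = ⟪A s (w s), w s⟫_ℂ := this.symm
      exact Complex.conj_eq_iff_im.1 h2
    rw [real_inner_eq_re_inner ℂ, hws, RCLike.real_smul_eq_coe_smul (K := ℂ)]
    rw [inner_smul_left, inner_smul_left, inner_add_left]
    simp [Complex.add_im, Complex.mul_re, him]
  have heqfun : (fun t => (⟪w t, w t⟫_ℝ : ℝ)) = fun t => ‖w t‖ ^ 2 := by
    funext t; rw [real_inner_self_eq_norm_sq]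
  have hsym : ⟪w s, w' s⟫_ℝ = ⟪w' s, w s⟫_ℝ := real_inner_comm _ _
  rw [heqfun, hsym] at h1
  convert h1 using 1
  rw [hre]; ring

/-- Let `H` be a complex Hilbert space, `h > 0`, `ε > 0`. Suppose `A(s)`
is a bounded self-adjoint operator on `H` for each `s ∈ ℝ`, `w : ℝ → H` is differentiable
with derivative `w'`, `f : ℝ → H` is continuous, and `h·w′(s) = i·(A(s)(w(s)) + f(s))` for
all `s`. Then for every `x ∈ [−ε, ε]`,
`‖w(x)‖ ≤ √3 · ε^{−1/2} · (∫_{−ε}^{ε} ‖w‖²)^{1/2} + √2 · ε^{1/2} · h⁻¹ · (∫_{−ε}^{ε} ‖f‖²)^{1/2}`. -/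
theorem stmt6
    {H : Type*} [NormedAddCommGroup H] [InnerProductSpace ℂ H] [CompleteSpace H]
    (h : ℝ) (hh : 0 < h) (ε : ℝ) (hε : 0 < ε)
    (A : ℝ → (H →L[ℂ] H))
    (hA : ∀ s : ℝ, ∀ u v : H, ⟪A s u, v⟫_ℂ = ⟪u, A s v⟫_ℂ)
    (w w' f : ℝ → H)
    (hw : ∀ s : ℝ, HasDerivAt w (w' s) s)
    (hf : Continuous f)
    (heq : ∀ s : ℝ, h • w' s = Complex.I • (A s (w s) + f s))
    (x : ℝ) (hx : x ∈ Set.Icc (-ε) ε) :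
    ‖w x‖ ≤ Real.sqrt 3 * (Real.sqrt ε)⁻¹ * Real.sqrt (∫ t in (-ε)..ε, ‖w t‖ ^ 2)
      + Real.sqrt 2 * Real.sqrt ε * h⁻¹ * Real.sqrt (∫ s in (-ε)..ε, ‖f s‖ ^ 2) := by
  have hwc : Continuous w := continuous_iff_continuousAt.2 fun s => (hw s).continuousAt
  set W2 := ∫ t in (-ε)..ε, ‖w t‖ ^ 2 with hW2def
  set F2 := ∫ s in (-ε)..ε, ‖f s‖ ^ 2 with hF2def
  have h2ε : (-ε : ℝ) ≤ ε := by linarith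
  have hW2nn : 0 ≤ W2 :=
    intervalIntegral.integral_nonneg h2ε (fun t _ => sq_nonneg _)
  have hF2nn : 0 ≤ F2 :=
    intervalIntegral.integral_nonneg h2ε (fun t _ => sq_nonneg _)
  set D : ℝ → ℝ := fun s => 2 * h⁻¹ * (⟪f s, w s⟫_ℂ).im with hDdef
  have hgderiv : ∀ s, HasDerivAt (fun t => ‖w t‖ ^ 2) (D s) s :=
    fun s => stmt6_deriv h hh A hA w w' f hw heq s
  have hDc : Continuous D := by
    apply Continuous.mul continuous_const
    exact Complex.continuous_im.comp (hf.inner hwc)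
  set B : ℝ → ℝ := fun s => 2 * ε * h⁻¹ ^ 2 * ‖f s‖ ^ 2 + (2 * ε)⁻¹ * ‖w s‖ ^ 2 with hBdef
  have hBc : Continuous B := by
    apply Continuous.add
    · exact continuous_const.mul (hf.norm.pow 2)
    · exact continuous_const.mul (hwc.norm.pow 2)
  have hDB : ∀ s, |D s| ≤ B s := by
    intro s
    have h1 : |(⟪f s, w s⟫_ℂ).im| ≤ ‖f s‖ * ‖w s‖ := by
      calc |(⟪f s, w s⟫_ℂ).im| ≤ ‖⟪f s, w s⟫_ℂ‖ := Complex.abs_im_le_norm _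
        _ = ‖⟪f s, w s⟫_ℂ‖ := rfl
        _ ≤ ‖f s‖ * ‖w s‖ := norm_inner_le_norm _ _
    have habs : |D s| ≤ 2 * h⁻¹ * (‖f s‖ * ‖w s‖) := by
      rw [hDdef]
      rw [abs_mul, abs_of_nonneg (by positivity : (0:ℝ) ≤ 2 * h⁻¹)]
      exact mul_le_mul_of_nonneg_left h1 (by positivity)
    refine habs.trans ?_
    rw [hBdef]
    have he1 : (2 * ε) * (2 * ε)⁻¹ = 1 := mul_inv_cancel₀ (by positivity)
    nlinarith [sq_nonneg (2 * ε * h⁻¹ * ‖f s‖ - ‖w s‖), mul_pos hε (inv_pos.2 hh),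
      norm_nonneg (f s), norm_nonneg (w s), inv_nonneg.2 hh.le, hε.le,
      mul_nonneg (mul_nonneg hε.le (inv_nonneg.2 hh.le)) (mul_nonneg (norm_nonneg (f s)) (norm_nonneg (w s)))]
  have hBnn : ∀ s, 0 ≤ B s := fun s => (abs_nonneg _).trans (hDB s)
  have hBi : IntervalIntegrable B MeasureTheory.volume (-ε) ε := hBc.intervalIntegrable _ _
  set C := ∫ s in (-ε)..ε, B s with hCdef
  have key : ∀ t ∈ Set.Icc (-ε) ε, ‖w x‖ ^ 2 ≤ ‖w t‖ ^ 2 + C := by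
    intro t ht
    have hftc : ∫ s in t..x, D s = ‖w x‖ ^ 2 - ‖w t‖ ^ 2 :=
      intervalIntegral.integral_eq_sub_of_hasDerivAt (fun s _ => hgderiv s)
        (hDc.intervalIntegrable _ _)
    have hsub : ∫ s in t..x, D s ≤ C := by
      rcases le_total t x with htx | htx
      · calc ∫ s in t..x, D s ≤ ∫ s in t..x, B s := by
              apply intervalIntegral.integral_mono_on htx (hDc.intervalIntegrable _ _)
                (hBc.intervalIntegrable _ _)
              exact fun s _ => (le_abs_self _).trans (hDB s)
          _ ≤ C := intervalIntegral.integral_mono_interval ht.1 htx hx.2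
              (Filter.Eventually.of_forall fun s => hBnn s) hBi
      · have hflip : ∫ s in t..x, D s = ∫ s in x..t, (fun s => -D s) s := by
          rw [intervalIntegral.integral_symm, ← intervalIntegral.integral_neg]
        rw [hflip]
        calc ∫ s in x..t, -D s ≤ ∫ s in x..t, B s := by
              apply intervalIntegral.integral_mono_on htx
                ((hDc.neg).intervalIntegrable _ _) (hBc.intervalIntegrable _ _)
              intro s _
              exact (neg_le_abs _).trans (hDB s)
          _ ≤ C := intervalIntegral.integral_mono_interval hx.1 htx ht.2
              (Filter.Eventually.of_forall fun s => hBnn s) hBi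
    linarith
  -- averaging over t in [-ε, ε]
  have havg : ∫ t in (-ε)..ε, ‖w x‖ ^ 2 ≤ ∫ t in (-ε)..ε, (‖w t‖ ^ 2 + C) := by
    apply intervalIntegral.integral_mono_on h2ε intervalIntegrable_const
      (((hwc.norm.pow 2).add continuous_const).intervalIntegrable _ _) key
  have hL : ∫ t in (-ε)..ε, (‖w x‖ ^ 2 : ℝ) = 2 * ε * ‖w x‖ ^ 2 := by
    rw [intervalIntegral.integral_const, smul_eq_mul]; ring
  have hR : ∫ t in (-ε)..ε, (‖w t‖ ^ 2 + C) = W2 + 2 * ε * C := by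
    rw [intervalIntegral.integral_add (f := fun t => ‖w t‖ ^ 2) (g := fun _ => C) ((hwc.norm.pow 2).intervalIntegrable _ _)
      intervalIntegrable_const, intervalIntegral.integral_const, smul_eq_mul]
    ring
  have hCval : C = 2 * ε * h⁻¹ ^ 2 * F2 + (2 * ε)⁻¹ * W2 := by
    rw [hCdef, hBdef]
    rw [intervalIntegral.integral_add (f := fun s => 2 * ε * h⁻¹ ^ 2 * ‖f s‖ ^ 2)
      (g := fun s => (2 * ε)⁻¹ * ‖w s‖ ^ 2) ((continuous_const.mul (hf.norm.pow 2)).intervalIntegrable _ _)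
      ((continuous_const.mul (hwc.norm.pow 2)).intervalIntegrable _ _),
      intervalIntegral.integral_const_mul, intervalIntegral.integral_const_mul]
  have hmain : ‖w x‖ ^ 2 ≤ ε⁻¹ * W2 + 2 * ε * h⁻¹ ^ 2 * F2 := by
    rw [hL, hR, hCval] at havg
    have h3 : ‖w x‖ ^ 2 ≤ (W2 + 2 * ε * (2 * ε * h⁻¹ ^ 2 * F2 + (2 * ε)⁻¹ * W2)) / (2 * ε) :=
      (le_div_iff₀ (by positivity)).2 (by linarith)
    refine h3.trans (le_of_eq ?_)
    field_simp
    ring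
  -- conclude
  set a := Real.sqrt 3 * (Real.sqrt ε)⁻¹ * Real.sqrt W2 with hadef
  set b := Real.sqrt 2 * Real.sqrt ε * h⁻¹ * Real.sqrt F2 with hbdef
  have ha2 : a ^ 2 = 3 * ε⁻¹ * W2 := by
    rw [hadef, mul_pow, mul_pow, inv_pow, Real.sq_sqrt (by norm_num : (3:ℝ) ≥ 0),
      Real.sq_sqrt hε.le, Real.sq_sqrt hW2nn]
  have hb2 : b ^ 2 = 2 * ε * h⁻¹ ^ 2 * F2 := by
    rw [hbdef, mul_pow, mul_pow, mul_pow, Real.sq_sqrt (by norm_num : (2:ℝ) ≥ 0),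
      Real.sq_sqrt hε.le, Real.sq_sqrt hF2nn]
  have han : 0 ≤ a := by positivity
  have hbn : 0 ≤ b := by positivity
  have hsq : ‖w x‖ ^ 2 ≤ (a + b) ^ 2 := by
    nlinarith [mul_nonneg han hbn, mul_nonneg (inv_nonneg.2 hε.le) hW2nn]
  calc ‖w x‖ = Real.sqrt (‖w x‖ ^ 2) := (Real.sqrt_sq (norm_nonneg _)).symm
    _ ≤ Real.sqrt ((a + b) ^ 2) := Real.sqrt_le_sqrt hsq
    _ = a + b := Real.sqrt_sq (by positivity)
end

section
/- Let m ∈ ℕ, let φ : ℝ × ℝ^m → ℝ^m be a C² map with φ(0,x) = x for every x ∈ ℝ^m, and let Σ ⊆ ℝ^m be compact. Then there exist δ > 0 and C ≥ 0 such that for all t ∈ [0,δ] and all x, y ∈ Σ: (i) (1/2)‖x − y‖ − C‖x − y‖² ≤ ‖φ(t,x) − φ(t,y)‖ ≤ 2‖x − y‖ + C‖x − y‖², and (ii) for every linear map π : ℝ^m → ℝ^k of operator norm at most 1, ‖π(φ(t,x)) − π(φ(t,y))‖ ≤ ‖π(x) − π(y)‖ + C·t·‖x − y‖. -/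
open ContinuousLinearMap

-- key lemma: for Ψ C² on ℝ × E with Ψ(0,·)=0, estimate ‖Ψ(t,x)-Ψ(t,y)‖ ≤ L t ‖x-y‖ on compact
lemma key {E : Type*} [NormedAddCommGroup E] [NormedSpace ℝ E] [FiniteDimensional ℝ E]
    (Ψ : ℝ × E → E) (hΨ : ContDiff ℝ 2 Ψ) (hΨ0 : ∀ x : E, Ψ (0, x) = 0)
    (R : ℝ) :
    ∃ L ≥ (0:ℝ), ∀ t ∈ Set.Icc (0:ℝ) 1, ∀ x ∈ Metric.closedBall (0:E) R,
      ∀ y ∈ Metric.closedBall (0:E) R,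
      ‖Ψ (t, x) - Ψ (t, y)‖ ≤ L * t * ‖x - y‖ := by
  set F := fderiv ℝ Ψ with hF
  have hF1 : ContDiff ℝ 1 F := hΨ.fderiv_right (by norm_num)
  have hFc : Continuous (fderiv ℝ F) := hF1.continuous_fderiv one_ne_zero
  set K : Set (ℝ × E) := Set.Icc (0:ℝ) 1 ×ˢ Metric.closedBall (0:E) R with hK
  have hKc : IsCompact K := isCompact_Icc.prod (isCompact_closedBall _ _)
  have hKconv : Convex ℝ K := (convex_Icc _ _).prod (convex_closedBall _ _)
  obtain ⟨L, hL⟩ := hKc.exists_bound_of_continuousOn (f := fderiv ℝ F) (hFc.continuousOn)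
  refine ⟨max L 0, le_max_right _ _, ?_⟩
  intro t ht x hx y hy
  -- F is Lipschitz on K with constant max L 0
  have hlip : ∀ p ∈ K, ∀ q ∈ K, ‖F p - F q‖ ≤ max L 0 * ‖p - q‖ := by
    intro p hp q hq
    exact hKconv.norm_image_sub_le_of_norm_fderiv_le
      (fun z _ => (hF1.differentiable one_ne_zero).differentiableAt)
      (fun z hz => le_trans (hL z hz) (le_max_left _ _)) hq hp
  -- derivative of x ↦ Ψ (t, x) at z is (F (t,z)).comp inr
  have hΨd : Differentiable ℝ Ψ := hΨ.differentiable (by norm_num)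
  have hslice : ∀ (s : ℝ) (z : E), HasFDerivAt (fun w => Ψ (s, w))
      ((F (s, z)).comp (ContinuousLinearMap.inr ℝ ℝ E)) z := by
    intro s z
    exact ((hΨd (s, z)).hasFDerivAt).comp z (hasFDerivAt_prodMk_right s z)
  -- at s = 0 the slice is constant 0, so (F (0,z)).comp inr = 0
  have hzero : ∀ z : E, (F (0, z)).comp (ContinuousLinearMap.inr ℝ ℝ E) = 0 := by
    intro z
    have h1 := hslice 0 z
    have h2 : HasFDerivAt (fun w : E => Ψ (0, w)) (0 : E →L[ℝ] E) z := by
      simp only [hΨ0]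
      exact hasFDerivAt_const 0 z
    exact h1.unique h2
  have hinr : ‖(ContinuousLinearMap.inr ℝ ℝ E)‖ ≤ 1 := by
    apply ContinuousLinearMap.opNorm_le_bound _ zero_le_one
    intro v; simp [Prod.norm_def]
  -- bound the slice derivative
  have hbd : ∀ z ∈ Metric.closedBall (0:E) R,
      ‖(F (t, z)).comp (ContinuousLinearMap.inr ℝ ℝ E)‖ ≤ max L 0 * t := by
    intro z hz
    have e1 : (F (t, z)).comp (ContinuousLinearMap.inr ℝ ℝ E)
        = (F (t, z) - F (0, z)).comp (ContinuousLinearMap.inr ℝ ℝ E) := by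
      rw [ContinuousLinearMap.sub_comp, hzero z, sub_zero]
    rw [e1]
    calc ‖(F (t, z) - F (0, z)).comp (ContinuousLinearMap.inr ℝ ℝ E)‖
        ≤ ‖F (t, z) - F (0, z)‖ * ‖(ContinuousLinearMap.inr ℝ ℝ E)‖ :=
          ContinuousLinearMap.opNorm_comp_le _ _
      _ ≤ ‖F (t, z) - F (0, z)‖ * 1 := by
          exact mul_le_mul_of_nonneg_left hinr (norm_nonneg _)
      _ = ‖F (t, z) - F (0, z)‖ := mul_one _
      _ ≤ max L 0 * ‖((t, z) : ℝ × E) - (0, z)‖ := by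
          apply hlip (t, z) ⟨ht, hz⟩ (0, z) ⟨⟨le_refl 0, zero_le_one⟩, hz⟩
      _ = max L 0 * t := by
          congr 1
          have e2 : ((t, z) : ℝ × E) - (0, z) = ((t, 0) : ℝ × E) := by
            simp [Prod.ext_iff]
          rw [e2]
          simp [Prod.norm_def]
          exact ht.1
  -- mean value on the slice
  have := (convex_closedBall (0:E) R).norm_image_sub_le_of_norm_fderiv_le
    (f := fun w => Ψ (t, w))
    (fun z _ => (hslice t z).differentiableAt)
    (C := max L 0 * t)
    (fun z hz => by rw [(hslice t z).fderiv]; exact hbd z hz) hy hx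
  exact this

/-- Let `φ : ℝ × ℝ^m → ℝ^m` be `C²` with `φ(0,x) = x`, and `Σ ⊆ ℝ^m`
compact. Then there are `δ > 0` and `C ≥ 0` such that for all `t ∈ [0,δ]` and `x, y ∈ Σ`:
(i) `(1/2)‖x−y‖ − C‖x−y‖² ≤ ‖φ(t,x) − φ(t,y)‖ ≤ 2‖x−y‖ + C‖x−y‖²`, and
(ii) for every linear map `π : ℝ^m → ℝ^k` of operator norm at most `1`,
`‖π(φ(t,x)) − π(φ(t,y))‖ ≤ ‖π(x) − π(y)‖ + C·t·‖x−y‖`. -/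
theorem stmt8
    (m : ℕ)
    (φ : ℝ × EuclideanSpace ℝ (Fin m) → EuclideanSpace ℝ (Fin m))
    (hφ : ContDiff ℝ 2 φ)
    (hφ0 : ∀ x : EuclideanSpace ℝ (Fin m), φ (0, x) = x)
    (Sig : Set (EuclideanSpace ℝ (Fin m))) (hSig : IsCompact Sig) :
    ∃ δ > 0, ∃ C ≥ (0 : ℝ), ∀ t ∈ Set.Icc (0 : ℝ) δ, ∀ x ∈ Sig, ∀ y ∈ Sig,
      ((1 / 2) * ‖x - y‖ - C * ‖x - y‖ ^ 2 ≤ ‖φ (t, x) - φ (t, y)‖ ∧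
        ‖φ (t, x) - φ (t, y)‖ ≤ 2 * ‖x - y‖ + C * ‖x - y‖ ^ 2) ∧
      (∀ (k : ℕ) (π : EuclideanSpace ℝ (Fin m) →L[ℝ] EuclideanSpace ℝ (Fin k)),
        ‖π‖ ≤ 1 →
        ‖π (φ (t, x)) - π (φ (t, y))‖ ≤ ‖π x - π y‖ + C * t * ‖x - y‖) := by
  set Ψ : ℝ × EuclideanSpace ℝ (Fin m) → EuclideanSpace ℝ (Fin m) :=
    fun p => φ p - p.2 with hΨdef
  have hΨ : ContDiff ℝ 2 Ψ := hφ.sub contDiff_snd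
  have hΨ0 : ∀ x : EuclideanSpace ℝ (Fin m), Ψ (0, x) = 0 := fun x => by
    simp only [hΨdef, hφ0 x, sub_self]
  obtain ⟨R, hR⟩ := hSig.isBounded.subset_closedBall (0 : EuclideanSpace ℝ (Fin m))
  obtain ⟨L, hL0, hLkey⟩ := key Ψ hΨ hΨ0 R
  refine ⟨min 1 (1 / (2 * (L + 1))), by positivity, L, hL0, ?_⟩
  intro t ht x hx y hy
  have ht1 : t ∈ Set.Icc (0:ℝ) 1 := ⟨ht.1, ht.2.trans (min_le_left _ _)⟩
  have hw := hLkey t ht1 x (hR hx) y (hR hy)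
  have hweq : Ψ (t, x) - Ψ (t, y) = φ (t, x) - φ (t, y) - (x - y) := by
    simp [hΨdef]; abel
  have hd0 : (0:ℝ) ≤ ‖x - y‖ := norm_nonneg _
  -- L * t ≤ 1/2
  have hLt : L * t ≤ 1 / 2 := by
    have h1 : t ≤ 1 / (2 * (L + 1)) := ht.2.trans (min_le_right _ _)
    have h2 : L * t ≤ L * (1 / (2 * (L + 1))) :=
      mul_le_mul_of_nonneg_left h1 hL0
    have h3 : L * (1 / (2 * (L + 1))) ≤ 1 / 2 := by
      rw [mul_one_div, div_le_div_iff₀ (by positivity) (by norm_num : (0:ℝ) < 2)]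
      nlinarith
    linarith
  have hwle : ‖φ (t, x) - φ (t, y) - (x - y)‖ ≤ L * t * ‖x - y‖ := by
    rw [← hweq]; exact hw
  have hhalf : L * t * ‖x - y‖ ≤ (1 / 2) * ‖x - y‖ :=
    mul_le_mul_of_nonneg_right hLt hd0
  have hCq : (0:ℝ) ≤ L * ‖x - y‖ ^ 2 := by positivity
  constructor
  · constructor
    · have := norm_sub_norm_le (x - y) (x - y - (φ (t, x) - φ (t, y)))
      have h4 : ‖x - y - (x - y - (φ (t, x) - φ (t, y)))‖ = ‖φ (t, x) - φ (t, y)‖ := by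
        congr 1; abel
      have h5 : ‖x - y - (φ (t, x) - φ (t, y))‖ = ‖φ (t, x) - φ (t, y) - (x - y)‖ :=
        norm_sub_rev _ _
      rw [h4, h5] at this
      linarith
    · have := norm_add_le (x - y) (φ (t, x) - φ (t, y) - (x - y))
      have h4 : x - y + (φ (t, x) - φ (t, y) - (x - y)) = φ (t, x) - φ (t, y) := by abel
      rw [h4] at this
      linarith
  · intro k π hπ
    have h4 : π (φ (t, x)) - π (φ (t, y))
        = (π x - π y) + π (φ (t, x) - φ (t, y) - (x - y)) := by
      simp only [← map_sub, ← map_add]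
      congr 1; abel
    rw [h4]
    have h5 : ‖π (φ (t, x) - φ (t, y) - (x - y))‖ ≤ L * t * ‖x - y‖ := by
      calc ‖π (φ (t, x) - φ (t, y) - (x - y))‖
          ≤ ‖π‖ * ‖φ (t, x) - φ (t, y) - (x - y)‖ := π.le_opNorm _
        _ ≤ 1 * (L * t * ‖x - y‖) :=
            mul_le_mul hπ hwle (norm_nonneg _) zero_le_one
        _ = L * t * ‖x - y‖ := one_mul _
    calc ‖(π x - π y) + π (φ (t, x) - φ (t, y) - (x - y))‖
        ≤ ‖π x - π y‖ + ‖π (φ (t, x) - φ (t, y) - (x - y))‖ := norm_add_le _ _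
      _ ≤ ‖π x - π y‖ + L * t * ‖x - y‖ := by linarith
end

section
/- Let N ≥ 1 be a natural number, C₀ > 0, m > 0 with N·m ≤ C₀, ε ∈ (0,1], and let a₁, …, a_N be nonnegative real numbers with ∑_{j=1}^N a_j² ≤ 1. Suppose that the number of indices j with ε²·m ≤ a_j² ≤ m/ε² is at most ε²·N. Then m^{1/2} · ∑_{j=1}^N a_j ≤ (1 + C₀ + √C₀) · ε. -/
/-!
Split the indices into those with `a_j² < ε²m`, those in the middle range and those with
`a_j² > m/ε²`. On the first group each term is below `ε√m`, so it contributes at most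
`N·m·ε ≤ C₀ε`. On the other two groups Cauchy–Schwarz gives `√m·∑ a_j ≤ √(m·#group)`; the
middle group has at most `ε²N` elements by hypothesis, and the last one at most `ε²/m`, because
each of its elements carries more than `m/ε²` of the unit mass.
-/

open Finset

namespace Finset

variable {ι : Type*} (s : Finset ι) (a : ι → ℝ) {m ε : ℝ}

theorem sqrt_mul_sum_le_card_mul_mul_of_sq_le (hm : 0 ≤ m) (hε : 0 ≤ ε)
    (h : ∀ j ∈ s, a j ^ 2 ≤ ε ^ 2 * m) : √m * ∑ j ∈ s, a j ≤ #s * m * ε := by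
  have hterm (j : ι) (hj : j ∈ s) : a j ≤ ε * √m := by
    refine (le_abs_self _).trans (abs_le_of_sq_le_sq ?_ (by positivity))
    rw [mul_pow, Real.sq_sqrt hm]
    exact h j hj
  have hsum : ∑ j ∈ s, a j ≤ #s * (ε * √m) := by
    rw [← nsmul_eq_mul]
    exact sum_le_card_nsmul s a _ hterm
  calc √m * ∑ j ∈ s, a j ≤ √m * (#s * (ε * √m)) := by gcongr
    _ = #s * m * ε := by linear_combination (#s * ε) * Real.mul_self_sqrt hm

theorem sqrt_mul_sum_le_sqrt_of_mul_card_le {K : ℝ} (hsum : ∑ j ∈ s, a j ^ 2 ≤ 1)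
    (hK : m * #s ≤ K) : √m * ∑ j ∈ s, a j ≤ √K := by
  have cauchy_schwarz : ∑ j ∈ s, a j ≤ √(#s : ℝ) := by
    refine (le_abs_self _).trans (Real.abs_le_sqrt ?_)
    calc (∑ j ∈ s, a j) ^ 2 ≤ #s * ∑ j ∈ s, a j ^ 2 := sq_sum_le_card_mul_sum_sq
      _ ≤ #s * 1 := by gcongr
      _ = #s := mul_one _
  calc √m * ∑ j ∈ s, a j ≤ √m * √(#s : ℝ) := by gcongr
    _ = √(m * #s) := (Real.sqrt_mul' m (Nat.cast_nonneg _)).symm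
    _ ≤ √K := Real.sqrt_le_sqrt hK

theorem sqrt_mul_sum_le_sqrt_mul_of_card_le {N C₀ : ℝ} (hm : 0 ≤ m) (hε : 0 ≤ ε)
    (hNm : N * m ≤ C₀) (hsum : ∑ j ∈ s, a j ^ 2 ≤ 1) (hcard : #s ≤ ε ^ 2 * N) :
    √m * ∑ j ∈ s, a j ≤ √C₀ * ε := by
  have hmcard : m * #s ≤ C₀ * ε ^ 2 :=
    calc m * #s ≤ m * (ε ^ 2 * N) := by gcongr
      _ = N * m * ε ^ 2 := by ring
      _ ≤ C₀ * ε ^ 2 := by gcongr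
  calc √m * ∑ j ∈ s, a j ≤ √(C₀ * ε ^ 2) := sqrt_mul_sum_le_sqrt_of_mul_card_le s a hsum hmcard
    _ = √C₀ * ε := by rw [Real.sqrt_mul' _ (sq_nonneg ε), Real.sqrt_sq hε]

theorem sqrt_mul_sum_le_of_div_le_sq (hε : 0 < ε) (hsum : ∑ j ∈ s, a j ^ 2 ≤ 1)
    (h : ∀ j ∈ s, m / ε ^ 2 ≤ a j ^ 2) : √m * ∑ j ∈ s, a j ≤ ε := by
  have hmass : #s * (m / ε ^ 2) ≤ 1 := by
    rw [← nsmul_eq_mul]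
    exact (card_nsmul_le_sum s _ _ h).trans hsum
  have hmcard : m * #s ≤ ε ^ 2 :=
    calc m * #s = #s * (m / ε ^ 2) * ε ^ 2 := by field_simp
      _ ≤ 1 * ε ^ 2 := by gcongr
      _ = ε ^ 2 := one_mul _
  calc √m * ∑ j ∈ s, a j ≤ √(ε ^ 2) := sqrt_mul_sum_le_sqrt_of_mul_card_le s a hsum hmcard
    _ = ε := Real.sqrt_sq hε.le

end Finset

theorem stmt11_general
    (N : ℕ)
    (C₀ m : ℝ) (hm : 0 < m) (hNm : (N : ℝ) * m ≤ C₀)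
    (ε : ℝ) (hε : 0 < ε)
    (a : Fin N → ℝ)
    (hsum : ∑ j, (a j) ^ 2 ≤ 1)
    (hcount : (({j : Fin N | ε ^ 2 * m ≤ (a j) ^ 2 ∧ (a j) ^ 2 ≤ m / ε ^ 2}).ncard : ℝ)
      ≤ ε ^ 2 * N) :
    Real.sqrt m * ∑ j, a j ≤ (1 + C₀ + Real.sqrt C₀) * ε := by
  set middle := fun j => ε ^ 2 * m ≤ a j ^ 2 ∧ a j ^ 2 ≤ m / ε ^ 2
  set low := fun j => a j ^ 2 < ε ^ 2 * m
  have hmass (s : Finset (Fin N)) : ∑ j ∈ s, a j ^ 2 ≤ 1 :=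
    (sum_le_univ_sum_of_nonneg fun _ => sq_nonneg _).trans hsum
  rw [← sum_filter_add_sum_filter_not univ middle,
    ← sum_filter_add_sum_filter_not (univ.filter (¬ middle ·)) low, filter_filter, filter_filter]
  set S_low := univ.filter fun j => ¬ middle j ∧ low j
  set S_high := univ.filter fun j => ¬ middle j ∧ ¬ low j
  have hmiddle := sqrt_mul_sum_le_sqrt_mul_of_card_le _ a hm.le hε.le hNm (hmass _)
    (by rwa [Set.ncard_eq_toFinset_card', Set.toFinset_ofPred] at hcount)
  have hlow := sqrt_mul_sum_le_card_mul_mul_of_sq_le S_low a hm.le hε.le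
    fun j hj => (mem_filter.1 hj).2.2.le
  have hhigh := sqrt_mul_sum_le_of_div_le_sq S_high a hε (hmass _) fun j hj => by
    obtain ⟨hnot_middle, hnot_low⟩ := (mem_filter.1 hj).2
    exact (not_le.1 fun h => hnot_middle ⟨not_lt.1 hnot_low, h⟩).le
  have hcard_low : (#S_low : ℝ) * m * ε ≤ C₀ * ε := by
    have : (#S_low : ℝ) ≤ N := by exact_mod_cast (card_le_univ _).trans_eq (Fintype.card_fin N)
    gcongr
    exact (mul_le_mul_of_nonneg_right this hm.le).trans hNm
  rw [mul_add, mul_add]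
  linarith

/-- Let `N ≥ 1`, `C₀ > 0`, `m > 0` with `N·m ≤ C₀`, `ε ∈ (0,1]`, and let
`a₁, …, a_N ≥ 0` with `∑ a_j² ≤ 1`. If the number of indices `j` with
`ε²·m ≤ a_j² ≤ m/ε²` is at most `ε²·N`, then `m^{1/2} · ∑ a_j ≤ (1 + C₀ + √C₀) · ε`. -/
theorem stmt11
    (N : ℕ) (hN : 1 ≤ N)
    (C₀ m : ℝ) (hC₀ : 0 < C₀) (hm : 0 < m) (hNm : (N : ℝ) * m ≤ C₀)
    (ε : ℝ) (hε : 0 < ε) (hε1 : ε ≤ 1)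
    (a : Fin N → ℝ) (ha : ∀ j, 0 ≤ a j)
    (hsum : ∑ j, (a j) ^ 2 ≤ 1)
    (hcount : (({j : Fin N | ε ^ 2 * m ≤ (a j) ^ 2 ∧ (a j) ^ 2 ≤ m / ε ^ 2}).ncard : ℝ)
      ≤ ε ^ 2 * N) :
    Real.sqrt m * ∑ j, a j ≤ (1 + C₀ + Real.sqrt C₀) * ε :=
  stmt11_general N C₀ m hm hNm ε hε a hsum hcount
end
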